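/- Let 0 < H < 1/2, t ∈ (0,T], N ∈ ℕ, h(t) = t/N, and grid points t_k = k·h(t). Then the sum of kernel discretization errors satisfies 3(Σ_{k=1}^{N−1} ∫_{t_{k−1}}^{t_k} [(t−s)^{H−1/2} − (t−t_k)^{H−1/2}]² ds)² ≤ (3/16) ζ(4) h(t)^{4H}, where ζ is the Riemann zeta function. -/

import Mathlib

open scoped BigOperators
open intervalIntegral

lemma int_sq (a b : ℝ) : ∫ s in a..b, (b - s) ^ 2 = (b - a) ^ 3 / 3 := by
  rw [intervalIntegral.integral_comp_sub_left (fun x => x ^ 2) b]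
  simp [integral_pow]
  ring

lemma rpow_sub_rpow_le {α c x : ℝ} (hc : 0 < c) (hcx : c ≤ x) (hα : α ≤ 0) :
    c ^ α - x ^ α ≤ -α * c ^ (α - 1) * (x - c) := by
  set φ : ℝ → ℝ := fun y => c ^ α - y ^ α + α * c ^ (α - 1) * (y - c) with hφdef
  have hd : ∀ y ∈ interior (Set.Ici c), HasDerivAt φ (α * c ^ (α - 1) - α * y ^ (α - 1)) y := by
    intro y hy
    rw [interior_Ici] at hy
    have hy0 : y ≠ 0 := ne_of_gt (lt_trans hc hy)
    have h1 : HasDerivAt (fun y : ℝ => c ^ α - y ^ α) (-(α * y ^ (α - 1))) y :=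
      (Real.hasDerivAt_rpow_const (Or.inl hy0)).const_sub _
    have h2 : HasDerivAt (fun y : ℝ => α * c ^ (α - 1) * (y - c)) (α * c ^ (α - 1)) y := by
      simpa using ((hasDerivAt_id y).sub_const c).const_mul (α * c ^ (α - 1))
    have := h1.add h2
    exact this.congr_deriv (by ring)
  have hanti : AntitoneOn φ (Set.Ici c) := by
    apply antitoneOn_of_deriv_nonpos (convex_Ici c)
    · apply ContinuousOn.add
      · apply ContinuousOn.sub continuousOn_const
        exact fun y hy => (Real.continuousAt_rpow_const y α
          (Or.inl (ne_of_gt (lt_of_lt_of_le hc hy)))).continuousWithinAt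
      · fun_prop
    · exact fun y hy => (hd y hy).differentiableAt.differentiableWithinAt
    · intro y hy
      rw [(hd y hy).deriv]
      have hyc : c ≤ y := le_of_lt (by rwa [interior_Ici] at hy)
      have : y ^ (α - 1) ≤ c ^ (α - 1) :=
        Real.rpow_le_rpow_of_nonpos hc hyc (by linarith)
      nlinarith
  have h0 : φ x ≤ φ c := hanti (by simp) (by simpa using hcx) hcx
  have : φ c = 0 := by simp [hφdef]
  rw [this] at h0
  simp only [hφdef] at h0
  linarith

lemma sq_diff_le {α c x : ℝ} (hc : 0 < c) (hcx : c ≤ x) (hα : α ≤ 0) :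
    (x ^ α - c ^ α) ^ 2 ≤ α ^ 2 * (c ^ (α - 1)) ^ 2 * (x - c) ^ 2 := by
  have h1 : c ^ α - x ^ α ≤ -α * c ^ (α - 1) * (x - c) := rpow_sub_rpow_le hc hcx hα
  have h2 : x ^ α ≤ c ^ α := Real.rpow_le_rpow_of_nonpos hc hcx hα
  have h3 : (0:ℝ) ≤ c ^ (α - 1) := Real.rpow_nonneg hc.le _
  nlinarith [sq_nonneg (x ^ α - c ^ α + -α * c ^ (α - 1) * (x - c))]

lemma sum_inv_sq_le (n : ℕ) : ∑ j ∈ Finset.Icc 1 n, (1 / (j:ℝ) ^ 2) ≤ 2 := by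
  have key : ∀ m : ℕ, 1 ≤ m → ∑ j ∈ Finset.Icc 1 m, (1 / (j:ℝ) ^ 2) ≤ 2 - 1 / (m:ℝ) := by
    intro m hm
    induction m, hm using Nat.le_induction with
    | base => norm_num
    | succ m hm ih =>
      rw [Finset.sum_Icc_succ_top (by omega)]
      have hm1 : (1:ℝ) ≤ (m:ℝ) := by exact_mod_cast hm
      have h1 : (0:ℝ) < m := by linarith
      have h2 : (0:ℝ) < (m:ℝ) + 1 := by linarith
      have hkey : (1:ℝ) / ((m:ℝ)+1) ^ 2 ≤ 1 / (m:ℝ) - 1 / ((m:ℝ)+1) := by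
        rw [div_sub_div _ _ (ne_of_gt h1) (ne_of_gt h2),
          div_le_div_iff₀ (by positivity) (by positivity)]
        nlinarith
      push_cast
      push_cast at ih
      linarith
  rcases Nat.eq_zero_or_pos n with h | h
  · simp [h]
  refine le_trans (key n h) ?_
  have h1 : (0:ℝ) < n := by exact_mod_cast h
  have : (0:ℝ) < 1 / n := by positivity
  linarith

lemma sum_reflect (N : ℕ) (f : ℕ → ℝ) :
    ∑ k ∈ Finset.Icc 1 (N - 1), f (N - k) = ∑ j ∈ Finset.Icc 1 (N - 1), f j := by
  apply Finset.sum_nbij' (fun k => N - k) (fun j => N - j) <;>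
    (intro a ha; simp only [Finset.mem_Icc] at *) <;> first | omega | rfl

lemma tsum_ge_one : (1:ℝ) ≤ ∑' n : ℕ, 1 / ((n : ℝ) + 1) ^ 4 := by
  have hs : Summable (fun n : ℕ => 1 / ((n : ℝ) + 1) ^ 4) := by
    have h := (Real.summable_one_div_nat_pow (p := 4)).mpr (by norm_num)
    have := (summable_nat_add_iff 1).mpr h
    simpa using this
  have := hs.le_tsum 0 (fun j _ => by positivity)
  simpa using this

set_option maxHeartbeats 1000000 in
/-- Deterministic kernel estimate for the hybrid scheme: for `H ∈ (0,1/2)`,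
`t ∈ (0,T]`, `N ≥ 1`, grid `t_k = k t/N`,
`3 (Σ_{k=1}^{N−1} ∫_{t_{k−1}}^{t_k} [(t−s)^{H−1/2} − (t−t_k)^{H−1/2}]² ds)²
  ≤ (3/16) ζ(4) (t/N)^{4H}`,
where `ζ(4) = Σ_{n≥1} n^{−4}`. -/
theorem hybrid_scheme_kernel_estimate (H T t : ℝ) (N : ℕ)
    (hH : 0 < H) (hH2 : H < 1 / 2) (ht : 0 < t) (htT : t ≤ T) (hN : 1 ≤ N) :
    3 * (∑ k ∈ Finset.Icc 1 (N - 1),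
        ∫ s in (t * ((k : ℝ) - 1) / N)..(t * (k : ℝ) / N),
          ((t - s) ^ (H - 1 / 2) - (t - t * (k : ℝ) / N) ^ (H - 1 / 2)) ^ 2) ^ 2
      ≤ (3 / 16) * (∑' n : ℕ, 1 / ((n : ℝ) + 1) ^ 4) * (t / N) ^ (4 * H) := by
  have hN0 : (0:ℝ) < N := by exact_mod_cast hN
  set α : ℝ := H - 1 / 2 with hαdef
  have hα0 : α < 0 := by rw [hαdef]; linarith
  have hαhalf : -(1/2 : ℝ) < α := by rw [hαdef]; linarith
  set h : ℝ := t / N with hhdef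
  have hh : 0 < h := div_pos ht hN0
  -- per-term estimate
  have hterm : ∀ k ∈ Finset.Icc 1 (N - 1),
      (∫ s in (t * ((k : ℝ) - 1) / N)..(t * (k : ℝ) / N),
          ((t - s) ^ α - (t - t * (k : ℝ) / N) ^ α) ^ 2)
        ≤ α ^ 2 / 3 * h ^ (2 * H) * (1 / ((N - k : ℕ) : ℝ) ^ 2) := by
    intro k hk
    obtain ⟨hk1, hk2⟩ := Finset.mem_Icc.mp hk
    have hkN : k < N := by omega
    set a : ℝ := t * ((k : ℝ) - 1) / N with hadef
    set b : ℝ := t * (k : ℝ) / N with hbdef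
    have hk1R : (1:ℝ) ≤ (k:ℝ) := by exact_mod_cast hk1
    have hab : a ≤ b := by
      rw [hadef, hbdef]
      apply div_le_div_of_nonneg_right _ hN0.le
      nlinarith
    have hba : b - a = h := by rw [hadef, hbdef, hhdef]; field_simp; ring
    have hmcast : ((N - k : ℕ) : ℝ) = (N : ℝ) - (k : ℝ) := Nat.cast_sub hkN.le
    have hm1 : (1:ℝ) ≤ ((N - k : ℕ) : ℝ) := by
      have : 1 ≤ N - k := by omega
      exact_mod_cast this
    have hcb : t - b = ((N - k : ℕ) : ℝ) * h := by
      rw [hmcast, hbdef, hhdef]; field_simp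
    have hc : 0 < t - b := by rw [hcb]; exact mul_pos (by linarith) hh
    -- pointwise bound
    have hpt : ∀ s ∈ Set.Icc a b,
        ((t - s) ^ α - (t - b) ^ α) ^ 2
          ≤ α ^ 2 * ((t - b) ^ (α - 1)) ^ 2 * (b - s) ^ 2 := by
      intro s hs
      have hcs : t - b ≤ t - s := by linarith [hs.2]
      have h2 := sq_diff_le hc hcs hα0.le
      rw [show t - s - (t - b) = b - s from by ring] at h2
      exact h2
    -- integrability
    have hcont : ContinuousOn (fun s => ((t - s) ^ α - (t - b) ^ α) ^ 2) (Set.Icc a b) := by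
      apply ContinuousOn.pow
      apply ContinuousOn.sub _ continuousOn_const
      intro s hs
      have hne : t - s ≠ 0 := ne_of_gt (lt_of_lt_of_le hc (by linarith [hs.2]))
      exact ((Real.continuousAt_rpow_const _ _ (Or.inl hne)).comp
        ((continuous_const.sub continuous_id).continuousAt)).continuousWithinAt
    have hint1 : IntervalIntegrable (fun s => ((t - s) ^ α - (t - b) ^ α) ^ 2)
        MeasureTheory.volume a b :=
      ContinuousOn.intervalIntegrable (by rwa [Set.uIcc_of_le hab])
    have hint2 : IntervalIntegrable
        (fun s => α ^ 2 * ((t - b) ^ (α - 1)) ^ 2 * (b - s) ^ 2)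
        MeasureTheory.volume a b :=
      ((by continuity : Continuous fun s : ℝ =>
        α ^ 2 * ((t - b) ^ (α - 1)) ^ 2 * (b - s) ^ 2)).intervalIntegrable a b
    have hmono := intervalIntegral.integral_mono_on hab hint1 hint2 hpt
    have hcalc : (∫ s in a..b, α ^ 2 * ((t - b) ^ (α - 1)) ^ 2 * (b - s) ^ 2)
        = α ^ 2 * ((t - b) ^ (α - 1)) ^ 2 * ((b - a) ^ 3 / 3) := by
      rw [intervalIntegral.integral_const_mul, int_sq]
    -- rewrite the constant
    have hsq : ((t - b) ^ (α - 1)) ^ 2 = (t - b) ^ ((α - 1) * 2) := by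
      rw [Real.rpow_mul hc.le, Real.rpow_two]
    have hmul : (t - b) ^ ((α - 1) * 2)
        = ((N - k : ℕ) : ℝ) ^ ((α - 1) * 2) * h ^ ((α - 1) * 2) := by
      rw [hcb, Real.mul_rpow (by linarith) hh.le]
    have hhyp : h ^ ((α - 1) * 2) * h ^ (3:ℕ) = h ^ (2 * H) := by
      rw [← Real.rpow_natCast h 3, ← Real.rpow_add hh]
      norm_num
      rw [hαdef]; ring_nf
    have hexp : ((N - k : ℕ) : ℝ) ^ ((α - 1) * 2) ≤ 1 / ((N - k : ℕ) : ℝ) ^ 2 := by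
      have h1 : ((N - k : ℕ) : ℝ) ^ ((α - 1) * 2) ≤ ((N - k : ℕ) : ℝ) ^ (-2 : ℝ) :=
        Real.rpow_le_rpow_of_exponent_le hm1 (by linarith)
      have h2 : ((N - k : ℕ) : ℝ) ^ (-2 : ℝ) = 1 / ((N - k : ℕ) : ℝ) ^ 2 := by
        rw [show (-2 : ℝ) = -((2:ℕ):ℝ) by norm_num, Real.rpow_neg (by linarith),
          Real.rpow_natCast, one_div]
      linarith [h1, h2.le, h2.ge]
    calc (∫ s in a..b, ((t - s) ^ α - (t - b) ^ α) ^ 2)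
        ≤ α ^ 2 * ((t - b) ^ (α - 1)) ^ 2 * ((b - a) ^ 3 / 3) := by
          rw [← hcalc]; exact hmono
      _ = α ^ 2 / 3 * h ^ (2 * H) * (((N - k : ℕ) : ℝ) ^ ((α - 1) * 2)) := by
          rw [hsq, hmul, hba, ← hhyp]; ring
      _ ≤ α ^ 2 / 3 * h ^ (2 * H) * (1 / ((N - k : ℕ) : ℝ) ^ 2) := by
          apply mul_le_mul_of_nonneg_left hexp
          positivity
  -- sum estimate
  set S : ℝ := ∑ k ∈ Finset.Icc 1 (N - 1),
      ∫ s in (t * ((k : ℝ) - 1) / N)..(t * (k : ℝ) / N),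
        ((t - s) ^ α - (t - t * (k : ℝ) / N) ^ α) ^ 2 with hSdef
  have hS_le : S ≤ α ^ 2 / 3 * h ^ (2 * H) * 2 := by
    calc S ≤ ∑ k ∈ Finset.Icc 1 (N - 1),
          α ^ 2 / 3 * h ^ (2 * H) * (1 / ((N - k : ℕ) : ℝ) ^ 2) :=
        Finset.sum_le_sum hterm
      _ = α ^ 2 / 3 * h ^ (2 * H) *
          ∑ k ∈ Finset.Icc 1 (N - 1), (1 / ((N - k : ℕ) : ℝ) ^ 2) := by
        rw [Finset.mul_sum]
      _ = α ^ 2 / 3 * h ^ (2 * H) *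
          ∑ j ∈ Finset.Icc 1 (N - 1), (1 / (j : ℝ) ^ 2) := by
        rw [sum_reflect N (fun j => 1 / (j : ℝ) ^ 2)]
      _ ≤ α ^ 2 / 3 * h ^ (2 * H) * 2 := by
        apply mul_le_mul_of_nonneg_left (sum_inv_sq_le (N - 1))
        positivity
  have hS_nonneg : 0 ≤ S := by
    apply Finset.sum_nonneg
    intro k hk
    obtain ⟨hk1, hk2⟩ := Finset.mem_Icc.mp hk
    have hk1R : (1:ℝ) ≤ (k:ℝ) := by exact_mod_cast hk1
    apply intervalIntegral.integral_nonneg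
    · apply div_le_div_of_nonneg_right _ hN0.le
      nlinarith
    · intro s _; positivity
  have hh4 : (h ^ (2 * H)) ^ 2 = h ^ (4 * H) := by
    rw [← Real.rpow_natCast (h ^ (2 * H)) 2, ← Real.rpow_mul hh.le]
    norm_num
    rw [show 2 * H * 2 = 4 * H by ring]
  have hpos : 0 < h ^ (4 * H) := Real.rpow_pos_of_pos hh _
  have hZ := tsum_ge_one
  have hα2 : α ^ 2 ≤ 1 / 4 := by nlinarith
  have hS2 : S ^ 2 ≤ (α ^ 2 / 3 * h ^ (2 * H) * 2) ^ 2 :=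
    pow_le_pow_left₀ hS_nonneg hS_le 2
  calc 3 * S ^ 2 ≤ 3 * (α ^ 2 / 3 * h ^ (2 * H) * 2) ^ 2 := by linarith
    _ = 4 / 3 * (α ^ 2 * α ^ 2) * (h ^ (2 * H)) ^ 2 := by ring
    _ = 4 / 3 * (α ^ 2 * α ^ 2) * h ^ (4 * H) := by rw [hh4]
    _ ≤ 4 / 3 * (1 / 16) * h ^ (4 * H) := by
        apply mul_le_mul_of_nonneg_right _ hpos.le
        nlinarith [sq_nonneg α]
    _ ≤ 3 / 16 * (∑' n : ℕ, 1 / ((n : ℝ) + 1) ^ 4) * h ^ (4 * H) := by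
        nlinarith [hpos, hZ]
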